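/- Let V be a finite set and let ρ = ρ₀ρ₁ρ₂⋯ be an infinite sequence over V, and let F = Inf(ρ) be the set of elements occurring infinitely often in ρ. Then the scores of F along prefixes of ρ tend to infinity: for every k ∈ ℕ there exists n₀ such that score_F(ρ₀⋯ρ_n) ≥ k for all n ≥ n₀. -/

import Mathlib

/- Common definitions for finite-time Muller games, following
   McNaughton / Fearnley-Zimmermann. -/

universe u

variable {V : Type u}

/-- The occurrence set of a finite word: the set of letters occurring in it. -/
def occ (x : List V) : Set V := {v | v ∈ x}

/-- `score F w` is the maximal `k` such that some suffix of `w` decomposes as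
`x₁ ⋯ x_k` with every `xᵢ` non-empty and `occ xᵢ = F` (with `max ∅ = 0`). -/
noncomputable def score (F : Set V) (w : List V) : ℕ :=
  sSup {k | ∃ xs : List (List V), xs.length = k ∧
    (∀ x ∈ xs, x ≠ [] ∧ occ x = F) ∧ xs.flatten <:+ w}

/-- `maxscore 𝓕 w` is the maximum of `score F u` over `F ∈ 𝓕` and non-empty
prefixes `u` of `w`. -/
noncomputable def maxscore (𝓕 : Set (Set V)) (w : List V) : ℕ :=
  sSup {n | ∃ F ∈ 𝓕, ∃ u : List V, u ≠ [] ∧ u <+: w ∧ n = score F u}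

/-- `AccGood F w x` : `x` is a suffix of `w` with `occ x ⊆ F` such that removing
any suffix `y` of `x` from `w` does not change the score of `F`. -/
def AccGood (F : Set V) (w x : List V) : Prop :=
  x <:+ w ∧ occ x ⊆ F ∧
    ∀ y : List V, y <:+ x → score F (w.take (w.length - y.length)) = score F w

/-- The accumulator `acc F w` : the occurrence set of the longest suffix `x` of `w`
with `occ x ⊆ F` such that the score of `F` did not change during `x`. -/
noncomputable def acc (F : Set V) (w : List V) : Set V :=
  occ (w.drop (sInf {i | AccGood F w (w.drop i)}))

/-- A non-empty word `w` is an `𝓕`-burden if `maxscore 𝓕 w ≤ 2` and for every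
`F ∈ 𝓕` either `score F w = 0`, or `score F w = 1` and `acc F w = ∅`. -/
def Burden (𝓕 : Set (Set V)) (w : List V) : Prop :=
  w ≠ [] ∧ maxscore 𝓕 w ≤ 2 ∧
    ∀ F ∈ 𝓕, score F w = 0 ∨ (score F w = 1 ∧ acc F w = ∅)

/-- The maxscore of an infinite sequence: the supremum (in `ℕ∞`) of the scores of
sets `F ∈ 𝓕` over all non-empty finite prefixes. -/
noncomputable def maxscoreInf (𝓕 : Set (Set V)) (ρ : ℕ → V) : ℕ∞ :=
  ⨆ F ∈ 𝓕, ⨆ n : ℕ, (score F ((List.range (n + 1)).map ρ) : ℕ∞)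

/-- The set of elements occurring infinitely often in the sequence `ρ`. -/
def limitSet (ρ : ℕ → V) : Set V := {v | ∀ N : ℕ, ∃ n, N ≤ n ∧ ρ n = v}

/-- The indicator of a play: the union of all `F ∈ 𝓕` with positive score
together with all non-empty accumulators of members of `𝓕`. -/
noncomputable def ind (𝓕 : Set (Set V)) (w : List V) : Set V :=
  (⋃ F ∈ {F ∈ 𝓕 | 0 < score F w}, F) ∪ ⋃ F ∈ {F ∈ 𝓕 | acc F w ≠ ∅}, acc F w

/-- An arena: a finite directed graph together with the set `V0` of vertices of
Player 0 (Player 1 owns the complement), where every vertex has a successor. -/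
structure Arena (V : Type u) where
  V0 : Set V
  E : V → V → Prop
  exists_succ : ∀ v, ∃ u, E v u

/-- The positions of Player `i`. -/
def Arena.pos (G : Arena V) (i : Fin 2) : Set V :=
  if i = 0 then G.V0 else G.V0ᶜ

/-- A strategy maps a history (the play so far, excluding the current vertex)
and the current vertex to a successor vertex. -/
abbrev Strategy (V : Type u) := List V → V → V

/-- A strategy is legal if it always moves along edges. -/
def Arena.Legal (G : Arena V) (σ : Strategy V) : Prop :=
  ∀ w v, G.E v (σ w v)

/-- An infinite play in `G` starting in `v`. -/
def Arena.IsPlay (G : Arena V) (v : V) (ρ : ℕ → V) : Prop :=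
  ρ 0 = v ∧ ∀ n, G.E (ρ n) (ρ (n + 1))

/-- An infinite play is consistent with the strategy `σ` of Player `i`. -/
def Arena.ConsistentInf (G : Arena V) (i : Fin 2) (σ : Strategy V) (ρ : ℕ → V) : Prop :=
  ∀ n, ρ n ∈ G.pos i → ρ (n + 1) = σ ((List.range n).map ρ) (ρ n)

/-- Player `i` (with winning condition `𝓕i`) wins the Muller game from `v`. -/
def Arena.MullerWinFrom (G : Arena V) (i : Fin 2) (𝓕i : Set (Set V)) (v : V) : Prop :=
  ∃ σ : Strategy V, G.Legal σ ∧
    ∀ ρ : ℕ → V, G.IsPlay v ρ → G.ConsistentInf i σ ρ → limitSet ρ ∈ 𝓕i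

/-- The winning region of Player `i` in the Muller game. -/
def Arena.MullerWinRegion (G : Arena V) (i : Fin 2) (𝓕i : Set (Set V)) : Set V :=
  {v | G.MullerWinFrom i 𝓕i v}

/-- A finite play is consistent with the strategy `σ` of Player `i`. -/
def Arena.ConsistentFin (G : Arena V) (i : Fin 2) (σ : Strategy V) (w : List V) : Prop :=
  ∀ (u : List V) (v x : V), u ++ [v, x] <+: w → v ∈ G.pos i → x = σ u v

/-- A play of the finite-time Muller game with threshold `k`: a finite path
whose maxscore (over all subsets) is exactly `k`, while the maxscore of
its proper prefixes is `< k`. -/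
def FTPlay (G : Arena V) (k : ℕ) (w : List V) : Prop :=
  w.Chain' G.E ∧ maxscore (Set.univ : Set (Set V)) w = k ∧
    maxscore (Set.univ : Set (Set V)) w.dropLast < k

/-- Player `i` wins the finite-time Muller game with threshold `k` from `v`. -/
def FTWinFrom (G : Arena V) (i : Fin 2) (𝓕i : Set (Set V)) (k : ℕ) (v : V) : Prop :=
  ∃ σ : Strategy V, G.Legal σ ∧
    ∀ w : List V, FTPlay G k w → w.head? = some v → G.ConsistentFin i σ w →
      ∃ F ∈ 𝓕i, score F w = k

/-- The winning region of Player `i` in the finite-time Muller game. -/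
def FTWinRegion (G : Arena V) (i : Fin 2) (𝓕i : Set (Set V)) (k : ℕ) : Set V :=
  {v | FTWinFrom G i 𝓕i k v}

/-- A play of McNaughton's finite-time Muller game: a finite path such that some
set `F` reaches score `|F|! + 1`, while no set did so in a proper prefix. -/
def McNPlay (G : Arena V) (w : List V) : Prop :=
  w.Chain' G.E ∧ (∃ F : Set V, score F w = F.ncard.factorial + 1) ∧
    ∀ u : List V, u <+: w → u ≠ w →
      ∀ F : Set V, score F u ≠ F.ncard.factorial + 1

/-- Player `i` wins McNaughton's finite-time Muller game from `v`. -/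
def McNWinFrom (G : Arena V) (i : Fin 2) (𝓕i : Set (Set V)) (v : V) : Prop :=
  ∃ σ : Strategy V, G.Legal σ ∧
    ∀ w : List V, McNPlay G w → w.head? = some v → G.ConsistentFin i σ w →
      ∃ F ∈ 𝓕i, score F w = F.ncard.factorial + 1

/-- The winning region of Player `i` in McNaughton's finite-time Muller game. -/
def McNWinRegion (G : Arena V) (i : Fin 2) (𝓕i : Set (Set V)) : Set V :=
  {v | McNWinFrom G i 𝓕i v}

open Classical in
/-- The list `ρ₀ ⋯ ρₙ` of the first `n+1` vertices of the unique play that starts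
in `v` and is consistent with the strategy `σ` of Player `i` and the strategy `τ`
of the other player. -/
noncomputable def playList (G : Arena V) (i : Fin 2) (σ τ : Strategy V) (v : V) :
    ℕ → List V
  | 0 => [v]
  | n + 1 =>
      let w := playList G i σ τ v n
      let u := w.getLastD v
      w ++ [if u ∈ G.pos i then σ w.dropLast u else τ w.dropLast u]

/-- `playOf G i σ τ v` : the unique play starting in `v` that is consistent with
the strategy `σ` of Player `i` and the strategy `τ` of the other player. -/
noncomputable def playOf (G : Arena V) (i : Fin 2) (σ τ : Strategy V) (v : V)
    (n : ℕ) : V :=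
  (playList G i σ τ v n).getLastD v

/-! Once the letters outside `F = Inf(ρ)` have stopped occurring, every long enough stretch of
`ρ` has occurrence set exactly `F`, and appending such a block to a word raises its `F`-score
by at least one. Induction on `k` then gives the claim. -/

open Filter

lemma bddAbove_score_set (F : Set V) (w : List V) :
    BddAbove {k | ∃ xs : List (List V), xs.length = k ∧
      (∀ x ∈ xs, x ≠ [] ∧ occ x = F) ∧ xs.flatten <:+ w} := by
  refine ⟨w.length, ?_⟩
  rintro k ⟨xs, rfl, hxs, hsuf⟩
  have hpos : ∀ n ∈ xs.map List.length, 1 ≤ n := by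
    simpa [Nat.one_le_iff_ne_zero] using fun x hx => (hxs x hx).1
  calc xs.length ≤ (xs.map List.length).sum := by
        simpa using List.length_le_sum_of_one_le _ hpos
    _ = xs.flatten.length := List.length_flatten.symm
    _ ≤ w.length := hsuf.length_le

lemma exists_decomposition_of_score (F : Set V) (w : List V) :
    ∃ xs : List (List V), xs.length = score F w ∧
      (∀ x ∈ xs, x ≠ [] ∧ occ x = F) ∧ xs.flatten <:+ w := by
  refine Nat.sSup_mem ?_ (bddAbove_score_set F w)
  exact ⟨0, [], rfl, by simp, List.nil_suffix⟩

lemma le_score {F : Set V} {w : List V} (xs : List (List V))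
    (hxs : ∀ x ∈ xs, x ≠ [] ∧ occ x = F) (hsuf : xs.flatten <:+ w) :
    xs.length ≤ score F w :=
  le_csSup (bddAbove_score_set F w) ⟨xs, rfl, hxs, hsuf⟩

lemma score_add_one_le_score_append {F : Set V} (u : List V) {x : List V}
    (hx : x ≠ []) (hocc : occ x = F) :
    score F u + 1 ≤ score F (u ++ x) := by
  obtain ⟨xs, hlen, hxs, hsuf⟩ := exists_decomposition_of_score F u
  have hxs' : ∀ y ∈ xs ++ [x], y ≠ [] ∧ occ y = F := by
    rintro y hy
    rcases List.mem_append.1 hy with hy | hy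
    · exact hxs y hy
    · exact (List.mem_singleton.1 hy) ▸ ⟨hx, hocc⟩
  have hsuf' : (xs ++ [x]).flatten <:+ u ++ x := by
    simpa using List.suffix_append_self_iff.2 hsuf
  simpa [hlen] using le_score (xs ++ [x]) hxs' hsuf'

section LimitSet

variable (ρ : ℕ → V)

lemma mem_limitSet_iff_frequently {v : V} : v ∈ limitSet ρ ↔ ∃ᶠ n in atTop, ρ n = v :=
  frequently_atTop.symm

lemma eventually_mem_limitSet [Finite V] : ∀ᶠ n in atTop, ρ n ∈ limitSet ρ := by
  have hleave : ∀ v, ∀ᶠ n in atTop, v ∉ limitSet ρ → ρ n ≠ v := by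
    intro v
    by_cases hv : v ∈ limitSet ρ
    · exact .of_forall fun _ h => absurd hv h
    · rw [mem_limitSet_iff_frequently, not_frequently] at hv
      exact hv.mono fun _ h _ => h
  filter_upwards [eventually_all.2 hleave] with n hn
  by_contra hnot
  exact hn (ρ n) hnot rfl

lemma eventually_occ_map_range'_eq_limitSet [Finite V] {s : ℕ}
    (hs : ∀ m ≥ s, ρ m ∈ limitSet ρ) :
    ∀ᶠ n in atTop, occ ((List.range' s (n - s)).map ρ) = limitSet ρ := by
  have hvisit : ∀ v, ∀ᶠ n in atTop, v ∈ limitSet ρ → ∃ m, s ≤ m ∧ m < n ∧ ρ m = v := by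
    intro v
    by_cases hv : v ∈ limitSet ρ
    · obtain ⟨m, hsm, hm⟩ := hv s
      filter_upwards [eventually_gt_atTop m] with n hn _ using ⟨m, hsm, hn, hm⟩
    · exact .of_forall fun _ h => absurd h hv
  filter_upwards [eventually_all.2 hvisit] with n hn
  ext v
  simp only [occ, Set.mem_ofPred_eq, List.mem_map, List.mem_range'_1]
  constructor
  · rintro ⟨m, ⟨hm, -⟩, rfl⟩
    exact hs m hm
  · intro hv
    obtain ⟨m, hsm, hmn, rfl⟩ := hn v hv
    exact ⟨m, ⟨hsm, by omega⟩, rfl⟩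

lemma map_range_eq_append_map_range' {s n : ℕ} (h : s ≤ n) :
    (List.range n).map ρ = (List.range s).map ρ ++ (List.range' s (n - s)).map ρ := by
  have hsplit := List.range'_append_1 (s := 0) (m := s) (n := n - s)
  rw [Nat.zero_add, Nat.add_sub_cancel' h] at hsplit
  rw [← List.map_append, List.range_eq_range', List.range_eq_range', hsplit]

end LimitSet

/-- For an infinite sequence `ρ` over a finite set `V` with
`F = Inf(ρ)`, the scores of `F` along the prefixes of `ρ` tend to infinity. -/
theorem stmt_14 {V : Type u} [Fintype V] (ρ : ℕ → V) :
    ∀ k : ℕ, ∃ n0 : ℕ, ∀ n ≥ n0,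
      k ≤ score (limitSet ρ) ((List.range (n + 1)).map ρ) := by
  intro k
  rw [← eventually_atTop]
  induction k with
  | zero => exact .of_forall fun _ => Nat.zero_le _
  | succ k ih =>
    obtain ⟨n0, hn0⟩ := eventually_atTop.1 (ih.and (eventually_mem_limitSet ρ))
    have hblock_occ := (tendsto_add_atTop_nat 1).eventually
      (eventually_occ_map_range'_eq_limitSet ρ (s := n0 + 1) fun m hm => (hn0 m (by omega)).2)
    filter_upwards [eventually_gt_atTop n0, hblock_occ] with n hn hocc
    have hblock_ne : (List.range' (n0 + 1) (n + 1 - (n0 + 1))).map ρ ≠ [] := by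
      simp only [ne_eq, List.map_eq_nil_iff, List.range'_eq_nil_iff]
      omega
    rw [map_range_eq_append_map_range' ρ (by omega : n0 + 1 ≤ n + 1)]
    exact (Nat.succ_le_succ (hn0 n0 le_rfl).1).trans
      (score_add_one_le_score_append _ hblock_ne hocc)
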